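/- Let F ∈ ℝ^{n×n} be Hurwitz with eigenvector S (eigenvalue λ < 0), let C ∈ ℝ^{p×n} with C S = e_i (the i-th standard basis vector of ℝ^p). If e solves ė = F e + S φ(t) with e(0) = 0, then the residual r(t) = C e(t) satisfies r(t) = e_i · ∫₀^t e^{λ(t−s)}φ(s) ds; hence all components of r other than the i-th are identically zero. -/

import Mathlib

open Matrix

theorem residual_pinned_to_output_direction
    (n p : ℕ) (F : Matrix (Fin n) (Fin n) ℝ)
    (hHurwitz : ∀ μ ∈ spectrum ℂ (F.map (algebraMap ℝ ℂ)), μ.re < 0)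
    (S : Fin n → ℝ) (lam : ℝ) (hlam : lam < 0)
    (heig : F.mulVec S = lam • S)
    (C : Matrix (Fin p) (Fin n) ℝ) (i : Fin p)
    (hCS : C.mulVec S = Pi.single i 1)
    (φ : ℝ → ℝ) (hφ : Continuous φ)
    (e : ℝ → Fin n → ℝ) (he0 : e 0 = 0)
    (hde : ∀ t, HasDerivAt e (F.mulVec (e t) + φ t • S) t) :
    ∀ t ≥ (0 : ℝ),
      C.mulVec (e t)
          = (∫ s in (0 : ℝ)..t, Real.exp (lam * (t - s)) * φ s) •
              (Pi.single i 1 : Fin p → ℝ) ∧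
      ∀ j : Fin p, j ≠ i → C.mulVec (e t) j = 0 := by
  -- auxiliary scalar function
  set ψ : ℝ → ℝ := fun s => Real.exp (-lam * s) * φ s with hψdef
  have hψ : Continuous ψ := by continuity
  set g : ℝ → ℝ := fun t => Real.exp (lam * t) * ∫ s in (0:ℝ)..t, ψ s with hgdef
  have hgint : ∀ t : ℝ,
      g t = ∫ s in (0:ℝ)..t, Real.exp (lam * (t - s)) * φ s := by
    intro t
    rw [hgdef]
    simp only
    rw [← intervalIntegral.integral_const_mul]
    refine intervalIntegral.integral_congr fun s _ => ?_
    rw [hψdef]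
    simp only
    rw [← mul_assoc, ← Real.exp_add]
    ring_nf
  have hg' : ∀ t : ℝ, HasDerivAt g (lam * g t + φ t) t := by
    intro t
    have hI : HasDerivAt (fun u => ∫ s in (0:ℝ)..u, ψ s) (ψ t) t :=
      intervalIntegral.integral_hasDerivAt_right (hψ.intervalIntegrable _ _)
        (hψ.stronglyMeasurableAtFilter _ _) hψ.continuousAt
    have hE : HasDerivAt (fun u => Real.exp (lam * u)) (lam * Real.exp (lam * t)) t := by
      exact (((hasDerivAt_id t).const_mul lam).exp).congr_deriv (by simp [mul_comm])
    have := hE.mul hI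
    refine this.congr_deriv ?_
    have hx : Real.exp (lam * t) * Real.exp (-lam * t) = 1 := by
      rw [← Real.exp_add]; ring_nf; exact Real.exp_zero
    rw [hgdef, hψdef]
    simp only
    rw [← mul_assoc (Real.exp (lam * t)) (Real.exp (-lam * t)), hx, one_mul]
    ring
  -- candidate solution
  set y : ℝ → Fin n → ℝ := fun t => g t • S with hydef
  have hy' : ∀ t, HasDerivAt y (F.mulVec (y t) + φ t • S) t := by
    intro t
    have := (hg' t).smul_const S
    refine this.congr_deriv ?_
    rw [hydef]
    simp only
    rw [Matrix.mulVec_smul, heig, add_smul, smul_smul]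
    module
  -- uniqueness of ODE solutions
  have key : ∀ t : ℝ, e t = y t := by
    set L : (Fin n → ℝ) →L[ℝ] (Fin n → ℝ) :=
      LinearMap.toContinuousLinearMap (Matrix.mulVecLin F) with hL
    have hLip : ∀ t : ℝ, LipschitzWith ‖L‖₊ (fun x => F.mulVec x + φ t • S) := by
      intro t
      refine LipschitzWith.of_dist_le_mul fun x y => ?_
      rw [dist_add_right]
      exact L.lipschitz.dist_le_mul x y
    intro t
    rcases le_total 0 t with ht | ht
    · have := ODE_solution_unique (v := fun t x => F.mulVec x + φ t • S)
        (K := ‖L‖₊) (f := e) (g := y) (a := 0) (b := t) hLip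
        (fun s _ => (hde s).continuousAt.continuousWithinAt)
        (fun s _ => ((hde s).hasDerivWithinAt))
        (fun s _ => (hy' s).continuousAt.continuousWithinAt)
        (fun s _ => ((hy' s).hasDerivWithinAt))
        (by rw [he0, hydef]; simp [hgdef])
      exact this ⟨ht, le_refl t⟩
    · -- t ≤ 0 : use time-reversed uniqueness
      have := ODE_solution_unique_of_mem_Icc_left
        (v := fun t x => F.mulVec x + φ t • S)
        (K := ‖L‖₊) (f := e) (g := y) (a := t) (b := 0) (s := fun _ => Set.univ)
        (fun s _ => (hLip s).lipschitzOnWith)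
        (fun s _ => (hde s).continuousAt.continuousWithinAt)
        (fun s _ => ((hde s).hasDerivWithinAt))
        (fun _ _ => trivial)
        (fun s _ => (hy' s).continuousAt.continuousWithinAt)
        (fun s _ => ((hy' s).hasDerivWithinAt))
        (fun _ _ => trivial)
        (by rw [he0, hydef]; simp [hgdef])
      exact this ⟨le_refl t, ht⟩
  intro t ht
  have h1 : C.mulVec (e t)
      = (∫ s in (0 : ℝ)..t, Real.exp (lam * (t - s)) * φ s) •
          (Pi.single i 1 : Fin p → ℝ) := by
    rw [key t, hydef]
    simp only
    rw [Matrix.mulVec_smul, hCS, ← hgint t]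
  exact ⟨h1, fun j hj => by rw [h1]; simp [Pi.single_eq_of_ne hj]⟩
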